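/- Suppose z ∈ ℂ∖{0} is such that the nonnegative matrix series N1(|z|), G1(|z|) and R1(|z|) converge entrywise. Then G1(z) and R1(z) satisfy the matrix quadratic equations A_{*,−1}(z) + A_{*,0}(z)·G1(z) + A_{*,1}(z)·G1(z)² = G1(z) and R1(z)²·A_{*,−1}(z) + R1(z)·A_{*,0}(z) + A_{*,1}(z) = R1(z). -/

import Mathlib

namespace QBDSeries

/-- The index set `H = {-1, 0, 1}`. -/
def Hs : Finset ℤ := {-1, 0, 1}

/-- Partial sum of the first `k` entries of a sequence `σ : Fin n → ℤ`. -/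
def psum {n : ℕ} (σ : Fin n → ℤ) (k : ℕ) : ℤ :=
  ∑ i ∈ Finset.univ.filter (fun i : Fin n => (i : ℕ) < k), σ i

/-- Condition defining the index set `𝓘_n`. -/
def condQ (n : ℕ) (σ : Fin n → ℤ) : Prop :=
  (∀ k : ℕ, 1 ≤ k → k ≤ n - 1 → 0 ≤ psum σ k) ∧ psum σ n = 0

/-- Condition defining the index set `𝓘_{D,n}`. -/
def condD (n : ℕ) (σ : Fin n → ℤ) : Prop :=
  (∀ k : ℕ, 1 ≤ k → k ≤ n - 1 → 0 ≤ psum σ k) ∧ psum σ n = -1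

/-- Condition defining the index set `𝓘_{U,n}`. -/
def condU (n : ℕ) (σ : Fin n → ℤ) : Prop :=
  (∀ k : ℕ, 1 ≤ k → k ≤ n - 1 → 1 ≤ psum σ k) ∧ psum σ n = 1

/-- `A_{*,i}(z) = Σ_{j∈H} A_{j,i} z^j` over `ℂ`. -/
noncomputable def AstarC (s0 : ℕ) (A : ℤ → ℤ → Matrix (Fin s0) (Fin s0) ℝ) (z : ℂ) (i : ℤ) :
    Matrix (Fin s0) (Fin s0) ℂ :=
  ∑ j ∈ Hs, (z ^ j) • (A j i).map Complex.ofReal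

/-- `A_{*,i}(z) = Σ_{j∈H} A_{j,i} z^j` over `ℝ`. -/
noncomputable def AstarR (s0 : ℕ) (A : ℤ → ℤ → Matrix (Fin s0) (Fin s0) ℝ) (z : ℝ) (i : ℤ) :
    Matrix (Fin s0) (Fin s0) ℝ :=
  ∑ j ∈ Hs, (z ^ j) • A j i

open Classical in
/-- `Σ_{σ ∈ cond} A_{*,σ1}(z)⋯A_{*,σn}(z)` over `ℂ`. -/
noncomputable def pathSumC (s0 : ℕ) (A : ℤ → ℤ → Matrix (Fin s0) (Fin s0) ℝ) (z : ℂ) (n : ℕ)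
    (cond : (Fin n → ℤ) → Prop) : Matrix (Fin s0) (Fin s0) ℂ :=
  ∑ σ : Fin n → {x : ℤ // x ∈ Hs},
    if cond (fun k => (σ k : ℤ)) then (List.ofFn fun k : Fin n => AstarC s0 A z (σ k : ℤ)).prod
    else 0

open Classical in
/-- `Σ_{σ ∈ cond} A_{*,σ1}(z)⋯A_{*,σn}(z)` over `ℝ`. -/
noncomputable def pathSumR (s0 : ℕ) (A : ℤ → ℤ → Matrix (Fin s0) (Fin s0) ℝ) (z : ℝ) (n : ℕ)
    (cond : (Fin n → ℤ) → Prop) : Matrix (Fin s0) (Fin s0) ℝ :=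
  ∑ σ : Fin n → {x : ℤ // x ∈ Hs},
    if cond (fun k => (σ k : ℤ)) then (List.ofFn fun k : Fin n => AstarR s0 A z (σ k : ℤ)).prod
    else 0

/-- `Q^{(n)}(z)` (complex); `Q^{(0)}(z) = I`. -/
noncomputable def QmatC (s0 : ℕ) (A : ℤ → ℤ → Matrix (Fin s0) (Fin s0) ℝ) (z : ℂ) (n : ℕ) :
    Matrix (Fin s0) (Fin s0) ℂ := pathSumC s0 A z n (condQ n)

/-- `D^{(n)}(z)` (complex); it vanishes for `n = 0`. -/
noncomputable def DmatC (s0 : ℕ) (A : ℤ → ℤ → Matrix (Fin s0) (Fin s0) ℝ) (z : ℂ) (n : ℕ) :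
    Matrix (Fin s0) (Fin s0) ℂ := pathSumC s0 A z n (condD n)

/-- `U^{(n)}(z)` (complex); it vanishes for `n = 0`. -/
noncomputable def UmatC (s0 : ℕ) (A : ℤ → ℤ → Matrix (Fin s0) (Fin s0) ℝ) (z : ℂ) (n : ℕ) :
    Matrix (Fin s0) (Fin s0) ℂ := pathSumC s0 A z n (condU n)

/-- `Q^{(n)}(z)` (real). -/
noncomputable def QmatR (s0 : ℕ) (A : ℤ → ℤ → Matrix (Fin s0) (Fin s0) ℝ) (z : ℝ) (n : ℕ) :
    Matrix (Fin s0) (Fin s0) ℝ := pathSumR s0 A z n (condQ n)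

/-- `D^{(n)}(z)` (real). -/
noncomputable def DmatR (s0 : ℕ) (A : ℤ → ℤ → Matrix (Fin s0) (Fin s0) ℝ) (z : ℝ) (n : ℕ) :
    Matrix (Fin s0) (Fin s0) ℝ := pathSumR s0 A z n (condD n)

/-- `U^{(n)}(z)` (real). -/
noncomputable def UmatR (s0 : ℕ) (A : ℤ → ℤ → Matrix (Fin s0) (Fin s0) ℝ) (z : ℝ) (n : ℕ) :
    Matrix (Fin s0) (Fin s0) ℝ := pathSumR s0 A z n (condU n)

/-- `N1(z) = Σ_{n≥0} Q^{(n)}(z)`, entrywise (complex). -/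
noncomputable def N1C (s0 : ℕ) (A : ℤ → ℤ → Matrix (Fin s0) (Fin s0) ℝ) (z : ℂ) :
    Matrix (Fin s0) (Fin s0) ℂ := Matrix.of fun i j => ∑' n : ℕ, QmatC s0 A z n i j

/-- `G1(z) = Σ_{n≥1} D^{(n)}(z)`, entrywise (complex). -/
noncomputable def G1C (s0 : ℕ) (A : ℤ → ℤ → Matrix (Fin s0) (Fin s0) ℝ) (z : ℂ) :
    Matrix (Fin s0) (Fin s0) ℂ := Matrix.of fun i j => ∑' n : ℕ, DmatC s0 A z n i j

/-- `R1(z) = Σ_{n≥1} U^{(n)}(z)`, entrywise (complex). -/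
noncomputable def R1C (s0 : ℕ) (A : ℤ → ℤ → Matrix (Fin s0) (Fin s0) ℝ) (z : ℂ) :
    Matrix (Fin s0) (Fin s0) ℂ := Matrix.of fun i j => ∑' n : ℕ, UmatC s0 A z n i j

/-- `N1(z)` (real). -/
noncomputable def N1R (s0 : ℕ) (A : ℤ → ℤ → Matrix (Fin s0) (Fin s0) ℝ) (z : ℝ) :
    Matrix (Fin s0) (Fin s0) ℝ := Matrix.of fun i j => ∑' n : ℕ, QmatR s0 A z n i j

/-- `G1(z)` (real). -/
noncomputable def G1R (s0 : ℕ) (A : ℤ → ℤ → Matrix (Fin s0) (Fin s0) ℝ) (z : ℝ) :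
    Matrix (Fin s0) (Fin s0) ℝ := Matrix.of fun i j => ∑' n : ℕ, DmatR s0 A z n i j

/-- `R1(z)` (real). -/
noncomputable def R1R (s0 : ℕ) (A : ℤ → ℤ → Matrix (Fin s0) (Fin s0) ℝ) (z : ℝ) :
    Matrix (Fin s0) (Fin s0) ℝ := Matrix.of fun i j => ∑' n : ℕ, UmatR s0 A z n i j

/-- `C(z,w) = Σ_{i,j∈H} A_{i,j} z^i w^j` over `ℂ`. -/
noncomputable def CmatC (s0 : ℕ) (A : ℤ → ℤ → Matrix (Fin s0) (Fin s0) ℝ) (z w : ℂ) :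
    Matrix (Fin s0) (Fin s0) ℂ :=
  ∑ i ∈ Hs, ∑ j ∈ Hs, (z ^ i * w ^ j) • (A i j).map Complex.ofReal

/-- `H1(z) = A_{*,0}(z) + A_{*,1}(z) N1(z) A_{*,-1}(z)` (complex). -/
noncomputable def H1C (s0 : ℕ) (A : ℤ → ℤ → Matrix (Fin s0) (Fin s0) ℝ) (z : ℂ) :
    Matrix (Fin s0) (Fin s0) ℂ :=
  AstarC s0 A z 0 + AstarC s0 A z 1 * N1C s0 A z * AstarC s0 A z (-1)

/-- A matrix with row sums one and nonnegative entries. -/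
def IsStochastic {n : ℕ} (M : Matrix (Fin n) (Fin n) ℝ) : Prop :=
  (∀ i j, 0 ≤ M i j) ∧ ∀ i, ∑ j, M i j = 1

end QBDSeries

/-!
Decomposing a first-passage walk (counted by `D⁽ⁿ⁺¹⁾`) after its first step gives
`D⁽ⁿ⁺¹⁾ = [n = 0] A₋₁ + A₀ D⁽ⁿ⁾ + A₁ Σ_{a+b=n} D⁽ᵃ⁾ D⁽ᵇ⁾`: after an up-step the walk has to go down
two levels, and it splits at its first passage through the intermediate level into two
first-passage walks. Entrywise, `|D⁽ⁿ⁾(z)| ≤ D⁽ⁿ⁾(|z|)`, so the series `G1(z)` converges absolutely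
in a normed matrix ring and the recursion sums, by the Cauchy product formula, to the quadratic
equation for `G1(z)`. Reversing a walk and negating its steps turns the walks counted by `U⁽ⁿ⁾`
into those counted by `D⁽ⁿ⁾` for the coefficients `(A_{p,-q})ᵀ`, and transposing the equation for
those coefficients gives the one for `R1(z)`.
-/

namespace QBDSeries

open Finset Matrix

theorem mem_Hs_iff (x : ℤ) : x ∈ Hs ↔ -1 ≤ x ∧ x ≤ 1 := by
  simp only [Hs, mem_insert, mem_singleton]
  omega

theorem sum_Hs {M : Type*} [AddCommMonoid M] (f : ℤ → M) :
    ∑ i : {x : ℤ // x ∈ Hs}, f i = f (-1) + f 0 + f 1 := by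
  rw [Finset.sum_coe_sort Hs f, Hs, sum_insert (by decide), sum_insert (by decide), sum_singleton,
    add_assoc]

theorem comp_fin_append {α β : Type*} {a b : ℕ} (g : α → β) (u : Fin a → α)
    (v : Fin b → α) :
    (fun k => g (Fin.append u v k)) = Fin.append (fun k => g (u k)) (fun k => g (v k)) := by
  funext k
  cases k using Fin.addCases <;> simp

section Walks

variable {R : Type*} [Semiring R]

open Classical

/-- `pathSumC s0 A z` and `pathSumR s0 A w` are `walkSum (AstarC s0 A z)` and
`walkSum (AstarR s0 A w)` by definition. -/
noncomputable def walkSum (B : ℤ → R) (n : ℕ) (cond : (Fin n → ℤ) → Prop) : R :=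
  ∑ σ : Fin n → {x : ℤ // x ∈ Hs},
    if cond (fun k => (σ k : ℤ)) then (List.ofFn fun k => B (σ k)).prod else 0

theorem walkSum_congr {B : ℤ → R} {n : ℕ} {c c' : (Fin n → ℤ) → Prop}
    (h : ∀ σ, c σ ↔ c' σ) : walkSum B n c = walkSum B n c' :=
  Finset.sum_congr rfl fun _ _ => if_congr (h _) rfl rfl

theorem walkSum_eq_zero {B : ℤ → R} {n : ℕ} {c : (Fin n → ℤ) → Prop}
    (h : ∀ σ, ¬ c σ) : walkSum B n c = 0 :=
  Finset.sum_eq_zero fun _ _ => if_neg (h _)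

theorem walkSum_zero (B : ℤ → R) (c : (Fin 0 → ℤ) → Prop) :
    walkSum B 0 c = if c Fin.elim0 then 1 else 0 := by
  rw [walkSum, Fintype.sum_unique, Subsingleton.elim (fun k => _) Fin.elim0]
  simp

theorem walkSum_succ (B : ℤ → R) (n : ℕ) (c : (Fin (n + 1) → ℤ) → Prop) :
    walkSum B (n + 1) c =
      ∑ i : {x : ℤ // x ∈ Hs}, B i * walkSum B n (fun τ => c (Fin.cons (i : ℤ) τ)) := by
  rw [walkSum, ← (Fin.consEquiv fun _ => {x : ℤ // x ∈ Hs}).sum_comp, Fintype.sum_prod_type]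
  refine Finset.sum_congr rfl fun i _ => ?_
  rw [walkSum, Finset.mul_sum]
  refine Finset.sum_congr rfl fun τ _ => ?_
  have hsteps : (fun k => ((Fin.consEquiv (fun _ => {x : ℤ // x ∈ Hs}) (i, τ) k : ℤ)))
      = Fin.cons (i : ℤ) (fun k => (τ k : ℤ)) := by
    funext k
    cases k using Fin.cases <;> rfl
  rw [hsteps, List.ofFn_succ]
  split_ifs <;> simp [Fin.consEquiv]

end Walks

section PartialSums

variable {n : ℕ}

theorem psum_eq_sum_ite (σ : Fin n → ℤ) (k : ℕ) :
    psum σ k = ∑ i : Fin n, if (i : ℕ) < k then σ i else 0 :=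
  Finset.sum_filter _ _

@[simp]
theorem psum_zero (σ : Fin n → ℤ) : psum σ 0 = 0 := by
  simp [psum_eq_sum_ite]

theorem psum_succ (σ : Fin n → ℤ) {k : ℕ} (hk : k < n) :
    psum σ (k + 1) = psum σ k + σ ⟨k, hk⟩ := by
  have hsplit : ∀ i : Fin n, (if (i : ℕ) < k + 1 then σ i else 0)
      = (if (i : ℕ) < k then σ i else 0) + (if i = ⟨k, hk⟩ then σ i else 0) := by
    intro i
    rcases lt_trichotomy (i : ℕ) k with h | h | h
    · rw [if_pos (by omega), if_pos h, if_neg (by simp [Fin.ext_iff]; omega), add_zero]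
    · rw [if_pos (by omega), if_neg (by omega), if_pos (Fin.ext h), zero_add]
    · rw [if_neg (by omega), if_neg (by omega), if_neg (by simp [Fin.ext_iff]; omega), add_zero]
  simp only [psum_eq_sum_ite, hsplit, Finset.sum_add_distrib, Finset.sum_ite_eq',
    Finset.mem_univ, if_true]

@[simp]
theorem psum_cons (i : ℤ) (τ : Fin n → ℤ) (k : ℕ) :
    psum (Fin.cons i τ : Fin (n + 1) → ℤ) (k + 1) = i + psum τ k := by
  simp [psum_eq_sum_ite, Fin.sum_univ_succ]

theorem psum_append_of_le {m : ℕ} (τ₁ : Fin m → ℤ) (τ₂ : Fin n → ℤ) {k : ℕ}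
    (hk : k ≤ m) : psum (Fin.append τ₁ τ₂) k = psum τ₁ k := by
  simp only [psum_eq_sum_ite, Fin.sum_univ_add, Fin.append_left, Fin.append_right,
    Fin.val_castAdd, Fin.val_natAdd, add_eq_left]
  exact Finset.sum_eq_zero fun i _ => if_neg (by omega)

theorem psum_append_add {m : ℕ} (τ₁ : Fin m → ℤ) (τ₂ : Fin n → ℤ) (k : ℕ) :
    psum (Fin.append τ₁ τ₂) (m + k) = psum τ₁ m + psum τ₂ k := by
  simp only [psum_eq_sum_ite, Fin.sum_univ_add, Fin.append_left, Fin.append_right,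
    Fin.val_castAdd, Fin.val_natAdd, add_lt_add_iff_left]
  congr 1
  exact Finset.sum_congr rfl fun i _ => by rw [if_pos (by omega), if_pos i.isLt]

theorem psum_neg_rev (σ : Fin n → ℤ) {k : ℕ} (hk : k ≤ n) :
    psum (fun j => -σ (Fin.rev j)) k = psum σ (n - k) - psum σ n := by
  have hsplit : ∀ j : Fin n, (if (j : ℕ) < n then σ j else 0)
      = (if (j : ℕ) < n - k then σ j else 0)
        + (if ((Fin.rev j : Fin n) : ℕ) < k then σ j else 0) := by
    intro j
    rw [Fin.val_rev]
    by_cases h : (j : ℕ) < n - k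
    · rw [if_pos j.isLt, if_pos h, if_neg (by omega), add_zero]
    · rw [if_pos j.isLt, if_neg h, if_pos (by omega), zero_add]
  have hrev : psum (fun j => -σ (Fin.rev j)) k
      = -∑ j : Fin n, if ((Fin.rev j : Fin n) : ℕ) < k then σ j else 0 := by
    rw [psum_eq_sum_ite, ← Finset.sum_neg_distrib,
      ← Equiv.sum_comp Fin.revPerm
        fun j => -(if ((Fin.rev j : Fin n) : ℕ) < k then σ j else 0)]
    exact Finset.sum_congr rfl fun j _ => by simp [apply_ite Neg.neg]
  rw [hrev, psum_eq_sum_ite σ n, psum_eq_sum_ite σ (n - k),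
    Finset.sum_congr rfl fun j _ => hsplit j, Finset.sum_add_distrib]
  ring

end PartialSums

section FirstPassage

variable {n : ℕ}

def condDD (n : ℕ) (σ : Fin n → ℤ) : Prop :=
  (∀ k : ℕ, 1 ≤ k → k ≤ n - 1 → -1 ≤ psum σ k) ∧ psum σ n = -2

def IsFirstPassage (a : ℕ) (σ : Fin n → ℤ) : Prop :=
  psum σ a = -1 ∧ ∀ k < a, psum σ k ≠ -1

theorem condD_cons_neg_one (τ : Fin n → ℤ) : condD (n + 1) (Fin.cons (-1) τ) ↔ n = 0 := by
  constructor
  · rintro ⟨hpos, -⟩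
    by_contra hn
    have := hpos 1 le_rfl (by omega)
    simp at this
  · rintro rfl
    exact ⟨fun k _ _ => by omega, by simp⟩

theorem condD_cons_zero (τ : Fin n → ℤ) : condD (n + 1) (Fin.cons 0 τ) ↔ condD n τ := by
  constructor
  · rintro ⟨hpos, hend⟩
    refine ⟨fun k hk1 hk2 => ?_, by simpa using hend⟩
    simpa using hpos (k + 1) (by omega) (by omega)
  · rintro ⟨hpos, hend⟩
    refine ⟨fun k hk1 hk2 => ?_, by simpa using hend⟩
    obtain ⟨k, rfl⟩ : ∃ k', k = k' + 1 := ⟨k - 1, by omega⟩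
    rcases k.eq_zero_or_pos with rfl | hk
    · simp
    · simpa using hpos k hk (by omega)

theorem condD_cons_one (τ : Fin n → ℤ) : condD (n + 1) (Fin.cons 1 τ) ↔ condDD n τ := by
  constructor
  · rintro ⟨hpos, hend⟩
    refine ⟨fun k hk1 hk2 => ?_, by simp at hend; omega⟩
    have := hpos (k + 1) (by omega) (by omega)
    simp at this; omega
  · rintro ⟨hpos, hend⟩
    refine ⟨fun k hk1 hk2 => ?_, by simp; omega⟩
    obtain ⟨k, rfl⟩ : ∃ k', k = k' + 1 := ⟨k - 1, by omega⟩
    rcases k.eq_zero_or_pos with rfl | hk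
    · simp
    · have := hpos k hk (by omega)
      simp; omega

theorem IsFirstPassage.unique {a a' : ℕ} {σ : Fin n → ℤ}
    (h : IsFirstPassage a σ) (h' : IsFirstPassage a' σ) : a = a' := by
  rcases lt_trichotomy a a' with hlt | heq | hgt
  · exact absurd h.1 (h'.2 a hlt)
  · exact heq
  · exact absurd h'.1 (h.2 a' hgt)

theorem exists_isFirstPassage {σ : Fin n → ℤ} (hstep : ∀ k, -1 ≤ σ k)
    (hσ : condDD n σ) : ∃ a ≤ n, IsFirstPassage a σ := by
  have hex : ∃ k, psum σ k ≤ -1 := ⟨n, by rw [hσ.2]; omega⟩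
  obtain ⟨a, hle, hmin⟩ : ∃ a, psum σ a ≤ -1 ∧ ∀ k < a, -1 < psum σ k :=
    ⟨Nat.find hex, Nat.find_spec hex, fun k hk => not_le.mp (Nat.find_min hex hk)⟩
  have ha0 : a ≠ 0 := by rintro rfl; simp at hle
  have han : a ≤ n := by
    by_contra! h
    have := hmin n h
    rw [hσ.2] at this; omega
  -- the steps are `≥ -1`, so the first partial sum `≤ -1` is exactly `-1`
  have hlast := psum_succ σ (k := a - 1) (by omega)
  rw [Nat.sub_add_cancel (Nat.one_le_iff_ne_zero.mpr ha0)] at hlast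
  have := hstep ⟨a - 1, by omega⟩
  have := hmin (a - 1) (by omega)
  exact ⟨a, han, by omega, fun k hk => (hmin k hk).ne'⟩

section
variable {a b : ℕ} {τ₁ : Fin a → ℤ} {τ₂ : Fin b → ℤ}

theorem condD_of_condDD_append (h : condDD (a + b) (Fin.append τ₁ τ₂))
    (hfirst : IsFirstPassage a (Fin.append τ₁ τ₂)) : condD a τ₁ ∧ condD b τ₂ := by
  obtain ⟨hpos, hend⟩ := h
  obtain ⟨hhit, hbefore⟩ := hfirst
  rw [psum_append_of_le τ₁ τ₂ le_rfl] at hhit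
  rw [psum_append_add, hhit] at hend
  have hb : b ≠ 0 := by rintro rfl; simp at hend
  refine ⟨⟨fun k hk1 hk2 => ?_, hhit⟩, fun k hk1 hk2 => ?_, by omega⟩
  · have h1 := hpos k hk1 (by omega)
    have h2 := hbefore k (by omega)
    rw [psum_append_of_le τ₁ τ₂ (by omega)] at h1 h2
    omega
  · have := hpos (a + k) (by omega) (by omega)
    rw [psum_append_add, hhit] at this
    omega

theorem condDD_append_of_condD (h₁ : condD a τ₁) (h₂ : condD b τ₂) :
    condDD (a + b) (Fin.append τ₁ τ₂) ∧ IsFirstPassage a (Fin.append τ₁ τ₂) := by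
  obtain ⟨hpos₁, hend₁⟩ := h₁
  obtain ⟨hpos₂, hend₂⟩ := h₂
  have ha : a ≠ 0 := by rintro rfl; simp at hend₁
  have hb : b ≠ 0 := by rintro rfl; simp at hend₂
  have hbefore : ∀ k < a, -1 < psum (Fin.append τ₁ τ₂) k := fun k hk => by
    rw [psum_append_of_le τ₁ τ₂ hk.le]
    rcases k.eq_zero_or_pos with rfl | hk0
    · simp
    · have := hpos₁ k hk0 (by omega); omega
  refine ⟨⟨fun k hk1 hk2 => ?_, by rw [psum_append_add, hend₁, hend₂]; rfl⟩,
    by rw [psum_append_of_le τ₁ τ₂ le_rfl, hend₁], fun k hk => (hbefore k hk).ne'⟩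
  rcases lt_or_ge k a with hka | hka
  · exact (hbefore k hka).le
  · obtain ⟨m, rfl⟩ : ∃ m, k = a + m := ⟨k - a, by omega⟩
    rw [psum_append_add, hend₁]
    rcases m.eq_zero_or_pos with rfl | hm
    · simp
    · have := hpos₂ m hm (by omega); omega

end

theorem condDD_and_isFirstPassage_iff {a b : ℕ} (σ : Fin (a + b) → ℤ) :
    condDD (a + b) σ ∧ IsFirstPassage a σ ↔
      condD a (fun k => σ (Fin.castAdd b k)) ∧ condD b (fun k => σ (Fin.natAdd a k)) := by
  obtain ⟨τ₁, τ₂, rfl⟩ : ∃ τ₁ τ₂, σ = Fin.append τ₁ τ₂ :=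
    ⟨_, _, Fin.append_castAdd_natAdd.symm⟩
  simp only [Fin.append_left, Fin.append_right]
  exact ⟨fun h => condD_of_condDD_append h.1 h.2, fun h => condDD_append_of_condD h.1 h.2⟩

end FirstPassage

section Recursion

variable {R : Type*} [Semiring R]

open Classical

theorem walkSum_mul_walkSum (B : ℤ → R) {a b : ℕ} (c₁ : (Fin a → ℤ) → Prop)
    (c₂ : (Fin b → ℤ) → Prop) :
    walkSum B a c₁ * walkSum B b c₂ = walkSum B (a + b)
      (fun σ => c₁ (fun k => σ (Fin.castAdd b k)) ∧ c₂ (fun k => σ (Fin.natAdd a k))) := by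
  rw [walkSum, walkSum, Finset.sum_mul_sum, walkSum, ← (Fin.appendEquiv a b).sum_comp,
    Fintype.sum_prod_type]
  refine Finset.sum_congr rfl fun τ₁ _ => Finset.sum_congr rfl fun τ₂ _ => ?_
  rw [show Fin.appendEquiv a b (τ₁, τ₂) = Fin.append τ₁ τ₂ from rfl,
    comp_fin_append (fun x : {x : ℤ // x ∈ Hs} => B x), List.ofFn_fin_append, List.prod_append,
    ite_zero_mul_ite_zero]
  simp only [Fin.append_left, Fin.append_right]

theorem walkSum_condDD_eq_sum_firstPassage (B : ℤ → R) (n : ℕ) :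
    walkSum B n (condDD n) =
      ∑ p ∈ antidiagonal n, walkSum B n (fun σ => condDD n σ ∧ IsFirstPassage p.1 σ) := by
  simp only [walkSum]
  rw [Finset.sum_comm]
  refine Finset.sum_congr rfl fun σ _ => ?_
  by_cases hc : condDD n (fun k => (σ k : ℤ))
  · obtain ⟨a, han, ha⟩ := exists_isFirstPassage (fun k => ((mem_Hs_iff _).1 (σ k).2).1) hc
    rw [Finset.sum_eq_single_of_mem (a, n - a) (HasAntidiagonal.mem_antidiagonal.2 (by omega)),
      if_pos hc, if_pos ⟨hc, ha⟩]
    rintro ⟨a', b'⟩ hp hne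
    refine if_neg fun ⟨_, ha'⟩ => hne ?_
    obtain rfl := ha'.unique ha
    rw [HasAntidiagonal.mem_antidiagonal] at hp
    exact Prod.ext rfl (by simp only at hp ⊢; omega)
  · simp [hc]

theorem walkSum_condDD (B : ℤ → R) (n : ℕ) :
    walkSum B n (condDD n) =
      ∑ p ∈ antidiagonal n, walkSum B p.1 (condD p.1) * walkSum B p.2 (condD p.2) := by
  rw [walkSum_condDD_eq_sum_firstPassage]
  refine Finset.sum_congr rfl fun ⟨a, b⟩ hp => ?_
  obtain rfl : a + b = n := HasAntidiagonal.mem_antidiagonal.1 hp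
  rw [walkSum_mul_walkSum]
  exact walkSum_congr condDD_and_isFirstPassage_iff

theorem walkSum_condD_zero (B : ℤ → R) : walkSum B 0 (condD 0) = 0 :=
  walkSum_eq_zero fun _ ⟨_, h⟩ => by simp at h

theorem walkSum_condD_succ (B : ℤ → R) (n : ℕ) :
    walkSum B (n + 1) (condD (n + 1)) =
      (if n = 0 then B (-1) else 0) + B 0 * walkSum B n (condD n)
        + B 1 * ∑ p ∈ antidiagonal n,
          walkSum B p.1 (condD p.1) * walkSum B p.2 (condD p.2) := by
  rw [walkSum_succ, sum_Hs fun i => B i * walkSum B n (fun τ => condD (n + 1) (Fin.cons i τ)),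
    walkSum_congr condD_cons_neg_one, walkSum_congr condD_cons_zero,
    walkSum_congr condD_cons_one, walkSum_condDD]
  rcases n.eq_zero_or_pos with rfl | hn
  · simp [walkSum_zero]
  · rw [walkSum_eq_zero fun _ => hn.ne', if_neg hn.ne', mul_zero]

end Recursion

section Reversal

variable {n : ℕ}

theorem condD_neg_rev_iff (σ : Fin n → ℤ) :
    condD n (fun k => -σ (Fin.rev k)) ↔ condU n σ := by
  simp only [condD, condU, psum_neg_rev σ le_rfl, Nat.sub_self, psum_zero]
  constructor
  · rintro ⟨hpos, hend⟩
    refine ⟨fun k hk1 hk2 => ?_, by omega⟩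
    have := hpos (n - k) (by omega) (by omega)
    rw [psum_neg_rev σ (by omega), Nat.sub_sub_self (by omega)] at this
    omega
  · rintro ⟨hpos, hend⟩
    refine ⟨fun k hk1 hk2 => ?_, by omega⟩
    rw [psum_neg_rev σ (by omega)]
    have := hpos (n - k) (by omega) (by omega)
    omega

def reflectWalk (σ : Fin n → {x : ℤ // x ∈ Hs}) : Fin n → {x : ℤ // x ∈ Hs} :=
  fun k => ⟨-σ (Fin.rev k), by
    have := (mem_Hs_iff _).1 (σ (Fin.rev k)).2
    rw [mem_Hs_iff]
    omega⟩

theorem reflectWalk_involutive : Function.Involutive (reflectWalk (n := n)) :=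
  fun σ => funext fun k => Subtype.ext (by simp [reflectWalk])

theorem ofFn_comp_rev {α : Type*} (f : Fin n → α) :
    List.ofFn (fun k => f (Fin.rev k)) = (List.ofFn f).reverse := by
  refine List.ext_getElem (by simp) fun i h₁ h₂ => ?_
  simp only [List.getElem_ofFn, List.getElem_reverse, List.length_ofFn]
  congr 1
  ext
  simp only [List.length_ofFn] at h₁
  simp [Fin.val_rev]
  omega

open Classical in
theorem walkSum_condU_eq_transpose {ι α : Type*} [Fintype ι] [DecidableEq ι] [CommSemiring α]
    (B : ℤ → Matrix ι ι α) (n : ℕ) :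
    walkSum B n (condU n) = (walkSum (fun i => (B (-i))ᵀ) n (condD n))ᵀ := by
  rw [walkSum, walkSum, transpose_sum]
  refine Fintype.sum_equiv (reflectWalk_involutive.toPerm _) _ _ fun σ => ?_
  simp only [Function.Involutive.coe_toPerm, reflectWalk, neg_neg]
  rw [apply_ite transpose, transpose_zero]
  refine (if_congr (condD_neg_rev_iff _) ?_ rfl).symm
  rw [transpose_list_prod, List.map_ofFn]
  simp only [Function.comp_def, transpose_transpose]
  rw [ofFn_comp_rev (fun k => B (σ k)), List.reverse_reverse]

end Reversal

section Domination

variable {ι 𝕜 : Type*} [Fintype ι] [DecidableEq ι] [NormedRing 𝕜] [NormOneClass 𝕜]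

theorem norm_prod_ofFn_apply_le {n : ℕ} {f : Fin n → Matrix ι ι 𝕜}
    {g : Fin n → Matrix ι ι ℝ}
    (hg : ∀ k a b, 0 ≤ g k a b) (hfg : ∀ k a b, ‖f k a b‖ ≤ g k a b) (a b : ι) :
    ‖(List.ofFn f).prod a b‖ ≤ (List.ofFn g).prod a b := by
  induction n generalizing a b with
  | zero => by_cases h : a = b <;> simp [one_apply, h]
  | succ n ih =>
    rw [List.ofFn_succ, List.ofFn_succ, List.prod_cons, List.prod_cons, mul_apply, mul_apply]
    refine (norm_sum_le _ _).trans (Finset.sum_le_sum fun c _ => (norm_mul_le _ _).trans ?_)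
    exact mul_le_mul (hfg 0 a c) (ih (fun k => hg k.succ) (fun k => hfg k.succ) c b)
      (norm_nonneg _) (hg 0 a c)

theorem norm_walkSum_apply_le {B : ℤ → Matrix ι ι 𝕜} {P : ℤ → Matrix ι ι ℝ}
    (hP : ∀ i a b, 0 ≤ P i a b) (hBP : ∀ i a b, ‖B i a b‖ ≤ P i a b)
    (n : ℕ) (c : (Fin n → ℤ) → Prop) (a b : ι) :
    ‖walkSum B n c a b‖ ≤ walkSum P n c a b := by
  rw [walkSum, walkSum, Matrix.sum_apply, Matrix.sum_apply]
  refine (norm_sum_le _ _).trans (Finset.sum_le_sum fun σ _ => ?_)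
  split_ifs
  · exact norm_prod_ofFn_apply_le (fun k => hP _) (fun k => hBP _) a b
  · simp

end Domination

section LinftyNorm

attribute [local instance] Matrix.linftyOpSeminormedAddCommGroup

theorem linfty_opNorm_le_sum_norm {m n α : Type*} [Fintype m] [Fintype n]
    [SeminormedAddCommGroup α] (M : Matrix m n α) : ‖M‖ ≤ ∑ i, ∑ j, ‖M i j‖ := by
  rw [linfty_opNorm_def]
  have hsup : (univ.sup fun i => ∑ j, ‖M i j‖₊) ≤ ∑ i, ∑ j, ‖M i j‖₊ :=
    Finset.sup_le fun i _ => Finset.single_le_sum (f := fun i => ∑ j, ‖M i j‖₊)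
      (fun _ _ => zero_le) (mem_univ i)
  simpa using NNReal.coe_le_coe.2 hsup

end LinftyNorm

theorem tsum_eq_of_quadratic_recursion {R : Type*} [NormedRing R] [CompleteSpace R]
    {d : ℕ → R} {a b c : R} (hd : Summable fun n => ‖d n‖) (h0 : d 0 = 0)
    (hrec : ∀ n, d (n + 1) = (if n = 0 then a else 0) + b * d n
      + c * ∑ p ∈ antidiagonal n, d p.1 * d p.2) :
    a + b * ∑' n, d n + c * ((∑' n, d n) * ∑' n, d n) = ∑' n, d n := by
  have hconv := (summable_norm_sum_mul_antidiagonal_of_summable_norm hd hd).of_norm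
  calc a + b * ∑' n, d n + c * ((∑' n, d n) * ∑' n, d n)
      = ∑' n, ((if n = 0 then a else 0) + b * d n
          + c * ∑ p ∈ antidiagonal n, d p.1 * d p.2) := by
        rw [tsum_mul_tsum_eq_tsum_sum_antidiagonal_of_summable_norm hd hd,
          Summable.tsum_add ((hasSum_ite_eq 0 a).summable.add (hd.of_norm.mul_left b))
            (hconv.mul_left c), Summable.tsum_add (hasSum_ite_eq 0 a).summable
            (hd.of_norm.mul_left b), tsum_ite_eq, hd.of_norm.tsum_mul_left, hconv.tsum_mul_left]
    _ = ∑' n, d (n + 1) := by simp only [hrec]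
    _ = ∑' n, d n := by rw [hd.of_norm.tsum_eq_zero_add, h0, zero_add]

section QuadraticEquations

variable {s0 : ℕ} {A : ℤ → ℤ → Matrix (Fin s0) (Fin s0) ℝ}

theorem AstarR_apply_nonneg (hA : ∀ i j : ℤ, ∀ k l, 0 ≤ A i j k l) {w : ℝ} (hw : 0 ≤ w)
    (i : ℤ) (k l : Fin s0) : 0 ≤ AstarR s0 A w i k l := by
  rw [AstarR, Matrix.sum_apply]
  exact Finset.sum_nonneg fun j _ => mul_nonneg (zpow_nonneg hw j) (hA j i k l)

theorem norm_AstarC_apply_le (hA : ∀ i j : ℤ, ∀ k l, 0 ≤ A i j k l) (z : ℂ) (i : ℤ)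
    (k l : Fin s0) : ‖AstarC s0 A z i k l‖ ≤ AstarR s0 A ‖z‖ i k l := by
  rw [AstarC, AstarR, Matrix.sum_apply, Matrix.sum_apply]
  refine (norm_sum_le _ _).trans (le_of_eq (Finset.sum_congr rfl fun j _ => ?_))
  simp [norm_zpow, abs_of_nonneg (hA j i k l)]

attribute [local instance] Matrix.linftyOpNormedRing Matrix.linftyOpNormedSpace in
theorem G1C_quadratic (hA : ∀ i j : ℤ, ∀ k l, 0 ≤ A i j k l) (z : ℂ)
    (hG : ∀ i j, Summable fun n : ℕ => DmatR s0 A ‖z‖ n i j) :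
    AstarC s0 A z (-1) + AstarC s0 A z 0 * G1C s0 A z
      + AstarC s0 A z 1 * (G1C s0 A z * G1C s0 A z) = G1C s0 A z := by
  have := FiniteDimensional.complete ℂ (Matrix (Fin s0) (Fin s0) ℂ)
  have hdom : ∀ n k l, ‖DmatC s0 A z n k l‖ ≤ DmatR s0 A ‖z‖ n k l := fun n =>
    norm_walkSum_apply_le (AstarR_apply_nonneg hA (norm_nonneg z)) (norm_AstarC_apply_le hA z)
      n (condD n)
  have hnorm : Summable fun n => ‖DmatC s0 A z n‖ :=
    Summable.of_nonneg_of_le (fun _ => norm_nonneg _)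
      (fun n => (linfty_opNorm_le_sum_norm _).trans
        (Finset.sum_le_sum fun k _ => Finset.sum_le_sum fun l _ => hdom n k l))
      (summable_sum fun k _ => summable_sum fun l _ => hG k l)
  have hG1 : G1C s0 A z = ∑' n, DmatC s0 A z n := by
    ext k l
    -- the `L∞` operator norm induces the entrywise topology on matrices
    exact ((congrFun (tsum_apply hnorm.of_norm) l).trans
      (tsum_apply (Pi.summable.1 hnorm.of_norm k))).symm
  rw [hG1]
  exact tsum_eq_of_quadratic_recursion hnorm (walkSum_condD_zero _) (walkSum_condD_succ _)

def reflect (A : ℤ → ℤ → Matrix (Fin s0) (Fin s0) ℝ) :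
    ℤ → ℤ → Matrix (Fin s0) (Fin s0) ℝ :=
  fun p q => (A p (-q))ᵀ

theorem reflect_nonneg (hA : ∀ i j : ℤ, ∀ k l, 0 ≤ A i j k l) :
    ∀ i j : ℤ, ∀ k l, 0 ≤ reflect A i j k l :=
  fun i j k l => hA i (-j) l k

theorem AstarC_reflect (z : ℂ) : AstarC s0 (reflect A) z = fun i => (AstarC s0 A z (-i))ᵀ := by
  funext i
  simp [AstarC, reflect, transpose_sum, transpose_map]

theorem AstarR_reflect (w : ℝ) : AstarR s0 (reflect A) w = fun i => (AstarR s0 A w (-i))ᵀ := by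
  funext i
  simp [AstarR, reflect, transpose_sum]

theorem UmatC_eq_transpose (z : ℂ) (n : ℕ) :
    UmatC s0 A z n = (DmatC s0 (reflect A) z n)ᵀ := by
  change walkSum _ n _ = (walkSum _ n _)ᵀ
  rw [walkSum_condU_eq_transpose, AstarC_reflect]

theorem UmatR_eq_transpose (w : ℝ) (n : ℕ) :
    UmatR s0 A w n = (DmatR s0 (reflect A) w n)ᵀ := by
  change walkSum _ n _ = (walkSum _ n _)ᵀ
  rw [walkSum_condU_eq_transpose, AstarR_reflect]

theorem G1C_reflect (z : ℂ) : G1C s0 (reflect A) z = (R1C s0 A z)ᵀ := by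
  ext i j
  simp [G1C, R1C, UmatC_eq_transpose]

end QuadraticEquations

end QBDSeries

open QBDSeries in
theorem statement8_general
    (s0 : ℕ)
    (A : ℤ → ℤ → Matrix (Fin s0) (Fin s0) ℝ)
    (hAnn : ∀ i j : ℤ, ∀ k l, 0 ≤ A i j k l)
    (z : ℂ)
    (hG : ∀ i j, Summable fun n : ℕ => DmatR s0 A ‖z‖ n i j)
    (hR : ∀ i j, Summable fun n : ℕ => UmatR s0 A ‖z‖ n i j) :
    AstarC s0 A z (-1) + AstarC s0 A z 0 * G1C s0 A z
        + AstarC s0 A z 1 * (G1C s0 A z * G1C s0 A z) = G1C s0 A z ∧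
    R1C s0 A z * R1C s0 A z * AstarC s0 A z (-1) + R1C s0 A z * AstarC s0 A z 0
        + AstarC s0 A z 1 = R1C s0 A z := by
  refine ⟨G1C_quadratic hAnn z hG, ?_⟩
  have hGreflect : ∀ i j, Summable fun n : ℕ => DmatR s0 (reflect A) ‖z‖ n i j :=
    fun i j => by simpa [UmatR_eq_transpose] using hR j i
  have h := congrArg Matrix.transpose (G1C_quadratic (reflect_nonneg hAnn) z hGreflect)
  simp only [G1C_reflect, AstarC_reflect, Matrix.transpose_add, Matrix.transpose_mul,
    Matrix.transpose_transpose, neg_neg, neg_zero] at h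
  convert h using 1
  abel

open QBDSeries in
/-- the matrix quadratic equations satisfied by `G1(z)` and `R1(z)`. -/
theorem statement8
    (s0 : ℕ) (hs0 : 1 ≤ s0)
    (A : ℤ → ℤ → Matrix (Fin s0) (Fin s0) ℝ)
    (hAsupp : ∀ i j : ℤ, ¬(i ∈ Hs ∧ j ∈ Hs) → A i j = 0)
    (hAnn : ∀ i j : ℤ, ∀ k l, 0 ≤ A i j k l)
    (hAst : IsStochastic (∑ i ∈ Hs, ∑ j ∈ Hs, A i j))
    (z : ℂ) (hz : z ≠ 0)
    (hN : ∀ i j, Summable fun n : ℕ => QmatR s0 A ‖z‖ n i j)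
    (hG : ∀ i j, Summable fun n : ℕ => DmatR s0 A ‖z‖ n i j)
    (hR : ∀ i j, Summable fun n : ℕ => UmatR s0 A ‖z‖ n i j) :
    AstarC s0 A z (-1) + AstarC s0 A z 0 * G1C s0 A z
        + AstarC s0 A z 1 * (G1C s0 A z * G1C s0 A z) = G1C s0 A z ∧
    R1C s0 A z * R1C s0 A z * AstarC s0 A z (-1) + R1C s0 A z * AstarC s0 A z 0
        + AstarC s0 A z 1 = R1C s0 A z :=
  statement8_general s0 A hAnn z hG hR
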